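/- arXiv:2512.24382 — 6 statements merged into one kernel-verified Lean document; each statement's English description precedes it below -/
import Mathlib

section
/- Let n ∈ ℕ, let a : Fin n → ℝ be strictly increasing, let z ∈ ℂ^n be nonzero, and let i be the largest index with z_i ≠ 0. Then, as t → −∞, the rescaled flow line t ↦ e^{t·a_i} · exp(−tA) z, whose j-th coordinate is e^{t(a_i − a_j)} z_j, converges in ℂ^n to the vector z_i · e_i. -/
open Filter Topology

lemma Complex.tendsto_ofReal_exp_mul_atBot {c : ℝ} (hc : 0 < c) :
    Tendsto (fun t : ℝ => (Real.exp (t * c) : ℂ)) atBot (𝓝 0) := by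
  have h := Real.tendsto_exp_atBot.comp (tendsto_id.atBot_mul_const hc)
  exact (Complex.continuous_ofReal.tendsto 0).comp h

theorem stmt1_general (n : ℕ) (a : Fin n → ℝ) (ha : StrictMono a) (z : Fin n → ℂ)
    (i : Fin n) (hmax : ∀ j : Fin n, z j ≠ 0 → j ≤ i) :
    Filter.Tendsto
      (fun t : ℝ => fun j : Fin n => (Real.exp (t * (a i - a j)) : ℂ) * z j)
      Filter.atBot (nhds (Pi.single i (z i))) := by
  refine tendsto_pi_nhds.mpr fun j => ?_
  rcases lt_trichotomy j i with hji | rfl | hij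
  · have hdecay := Complex.tendsto_ofReal_exp_mul_atBot (sub_pos.mpr (ha hji))
    simpa [Pi.single_eq_of_ne hji.ne] using hdecay.mul_const (z j)
  · simp
  · have hzj : z j = 0 := not_imp_comm.mp (hmax j) hij.not_ge
    simp [hzj, Pi.single_eq_of_ne hij.ne']

/-- For a strictly increasing `a : Fin n → ℝ` and a nonzero `z ∈ ℂⁿ` whose largest
nonvanishing coordinate index is `i`, the rescaled flow line
`t ↦ e^{t aᵢ} · exp(−tA) z` (with `A = diag(a₀,…,a_{n−1})`), whose `j`-th coordinate
is `e^{t(aᵢ − aⱼ)} zⱼ`, converges to `zᵢ · eᵢ` as `t → −∞`. -/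
theorem stmt1 (n : ℕ) (a : Fin n → ℝ) (ha : StrictMono a) (z : Fin n → ℂ) (hz : z ≠ 0)
    (i : Fin n) (hi : z i ≠ 0) (hmax : ∀ j : Fin n, z j ≠ 0 → j ≤ i) :
    Filter.Tendsto
      (fun t : ℝ => fun j : Fin n => (Real.exp (t * (a i - a j)) : ℂ) * z j)
      Filter.atBot (nhds (Pi.single i (z i))) :=
  stmt1_general n a ha z i hmax
end

section
/- Let n, k ∈ ℕ with k ≤ n and let a : Fin n → ℝ be strictly increasing; set A = diag(a_0, …, a_{n−1}). For every k-dimensional subspace V ⊆ ℂ^n there exist k-element subsets I₋, I₊ ⊆ Fin n such that the orthogonal projection matrices P_{exp(−tA)·V} converge in operator norm, as t → −∞, to the orthogonal projection onto span{e_i : i ∈ I₋}, and, as t → +∞, to the orthogonal projection onto span{e_i : i ∈ I₊}. -/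
/-!
Write `V` in echelon form for the order of the coordinates given by `a`: it is spanned by vectors
`v m` with `v m (p m) = 1` and `v m j = 0` whenever `a j < a (p m)`, for distinct pivots `p m`.
Then `e^{t a (p m)} exp(-tA) v m → e_{p m}` as `t → ∞`, so `exp(-tA)·V` is spanned by a frame
tending to an orthonormal one. The projection onto the range of an injective `M` is
`M (M†M)⁻¹ M†`, which is continuous in `M`, so the projections converge to the projection onto
`span {e_{p m}}`. Replacing `(a, t)` by `(-a, -t)` gives the limit at `-∞`.
-/

namespace Stmt3

/-- The linear map `exp(−tA) = diag(e^{−t a₀}, …, e^{−t a_{n−1}})` on `ℂⁿ`,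
for `A = diag(a₀, …, a_{n−1})`. -/
noncomputable def flowMap (n : ℕ) (a : Fin n → ℝ) (t : ℝ) :
    EuclideanSpace ℂ (Fin n) →ₗ[ℂ] EuclideanSpace ℂ (Fin n) :=
  ((WithLp.linearEquiv 2 ℂ (Fin n → ℂ)).symm.toLinearMap.comp
      (LinearMap.pi fun j : Fin n =>
        (Real.exp (-(t * a j)) : ℂ) • (LinearMap.proj j : (Fin n → ℂ) →ₗ[ℂ] ℂ))).comp
    (WithLp.linearEquiv 2 ℂ (Fin n → ℂ)).toLinearMap

/-- The orthogonal projection of `ℂⁿ` onto a subspace `V`, as a continuous linear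
map `ℂⁿ → ℂⁿ` (the "projection matrix"). -/
noncomputable def projCLM {n : ℕ} (V : Submodule ℂ (EuclideanSpace ℂ (Fin n))) :
    EuclideanSpace ℂ (Fin n) →L[ℂ] EuclideanSpace ℂ (Fin n) :=
  V.subtypeL.comp (Submodule.orthogonalProjection V)

/-- The coordinate subspace `span {eᵢ : i ∈ I}` of `ℂⁿ`. -/
noncomputable def coordSub (n : ℕ) (I : Finset (Fin n)) :
    Submodule ℂ (EuclideanSpace ℂ (Fin n)) :=
  Submodule.span ℂ ((fun i => EuclideanSpace.single i (1 : ℂ)) '' (I : Set (Fin n)))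

open Filter Topology ContinuousLinearMap

section GramProjection

variable {𝕜 E F : Type*} [RCLike 𝕜] [NormedAddCommGroup E] [InnerProductSpace 𝕜 E]
  [CompleteSpace E] [NormedAddCommGroup F] [InnerProductSpace 𝕜 F] [CompleteSpace F]

theorem starProjection_range_eq_of_isUnit {M : F →L[𝕜] E}
    [(M : F →ₗ[𝕜] E).range.HasOrthogonalProjection] (h : IsUnit (adjoint M ∘L M)) :
    (M : F →ₗ[𝕜] E).range.starProjection = M ∘L Ring.inverse (adjoint M ∘L M) ∘L adjoint M := by
  ext x
  refine Submodule.eq_starProjection_of_mem_of_inner_eq_zero ⟨_, rfl⟩ ?_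
  rintro _ ⟨y, rfl⟩
  have hG : (adjoint M ∘L M) ∘L Ring.inverse (adjoint M ∘L M) ∘L adjoint M = adjoint M := by
    rw [← comp_assoc, ← mul_def, Ring.mul_inverse_cancel _ h, one_def, id_comp]
  rw [coe_coe, inner_sub_left, comp_apply, ← adjoint_inner_left, ← adjoint_inner_left,
    ← comp_apply (adjoint M) M, ← comp_apply (adjoint M ∘L M), hG, sub_self]

variable [FiniteDimensional 𝕜 F]

theorem isUnit_adjoint_comp_self_of_injective {M : F →L[𝕜] E} (h : Function.Injective M) :
    IsUnit (adjoint M ∘L M) := by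
  rw [isUnit_iff_isUnit_toLinearMap, LinearMap.isUnit_iff_ker_eq_bot]
  exact (ker_adjoint_comp_self M).trans (LinearMap.ker_eq_bot.mpr h)

theorem continuousAt_starProjection_range {M : F →L[𝕜] E} (h : Function.Injective M) :
    ContinuousAt (fun N : F →L[𝕜] E => (N : F →ₗ[𝕜] E).range.starProjection) M := by
  have hG : IsUnit (adjoint M ∘L M) := isUnit_adjoint_comp_self_of_injective h
  have hunit : ∀ᶠ N in 𝓝 M, IsUnit (adjoint N ∘L N) :=
    (by fun_prop : Continuous fun N : F →L[𝕜] E => adjoint N ∘L N).continuousAt.eventually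
      (Units.isOpen.mem_nhds hG)
  refine ContinuousAt.congr ?_ (hunit.mono fun N hN => (starProjection_range_eq_of_isUnit hN).symm)
  obtain ⟨u, hu⟩ := hG
  have hinv : ContinuousAt (fun N : F →L[𝕜] E => Ring.inverse (adjoint N ∘L N)) M :=
    ContinuousAt.comp (g := Ring.inverse) (hu ▸ NormedRing.inverse_continuousAt u) (by fun_prop)
  exact continuousAt_id.clm_comp (hinv.clm_comp (by fun_prop))

end GramProjection

theorem span_range_smul_eq_of_isUnit {R M ι : Type*} [Semiring R] [AddCommMonoid M]
    [Module R M] {c : ι → R} (hc : ∀ i, IsUnit (c i)) (v : ι → M) :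
    Submodule.span R (Set.range fun i => c i • v i) = Submodule.span R (Set.range v) := by
  simp_rw [Submodule.span_range_eq_iSup, Submodule.span_singleton_smul_eq (hc _)]

section Frame

variable (𝕜 : Type*) {E ι : Type*} [RCLike 𝕜] [NormedAddCommGroup E] [Fintype ι]

noncomputable def frameMap [NormedSpace 𝕜 E] (w : ι → E) : EuclideanSpace 𝕜 ι →L[𝕜] E :=
  ∑ m, (EuclideanSpace.proj m).smulRight (w m)

variable {𝕜}

section
variable [NormedSpace 𝕜 E]

theorem frameMap_apply (w : ι → E) (c : EuclideanSpace 𝕜 ι) :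
    frameMap 𝕜 w c = ∑ m, c m • w m := by
  simp [frameMap]

theorem range_frameMap (w : ι → E) :
    (frameMap 𝕜 w : EuclideanSpace 𝕜 ι →ₗ[𝕜] E).range = Submodule.span 𝕜 (Set.range w) := by
  have : (frameMap 𝕜 w : EuclideanSpace 𝕜 ι →ₗ[𝕜] E) =
      Fintype.linearCombination 𝕜 w ∘ₗ (WithLp.linearEquiv 2 𝕜 (ι → 𝕜)).toLinearMap := by
    ext c
    simp [frameMap_apply, Fintype.linearCombination_apply]
  rw [this, LinearMap.range_comp_of_range_eq_top _ (LinearEquiv.range _),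
    Fintype.range_linearCombination]

theorem injective_frameMap {w : ι → E} (h : LinearIndependent 𝕜 w) :
    Function.Injective (frameMap 𝕜 w) := by
  refine (injective_iff_map_eq_zero _).mpr fun c hc => ?_
  ext m
  exact Fintype.linearIndependent_iff.mp h c (by rwa [frameMap_apply] at hc) m

theorem continuous_frameMap : Continuous (frameMap 𝕜 : (ι → E) → EuclideanSpace 𝕜 ι →L[𝕜] E) := by
  unfold frameMap
  fun_prop

end

theorem tendsto_starProjection_span [InnerProductSpace 𝕜 E] [FiniteDimensional 𝕜 E]
    {α : Type*} {l : Filter α} {w : α → ι → E} {w₀ : ι → E} (hw : Tendsto w l (𝓝 w₀))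
    (h₀ : LinearIndependent 𝕜 w₀) :
    Tendsto (fun x => (Submodule.span 𝕜 (Set.range (w x))).starProjection) l
      (𝓝 (Submodule.span 𝕜 (Set.range w₀)).starProjection) := by
  have := FiniteDimensional.complete 𝕜 E
  have := (continuousAt_starProjection_range (injective_frameMap h₀)).tendsto.comp
    ((continuous_frameMap.tendsto w₀).comp hw)
  simpa only [Function.comp_def, range_frameMap] using this

end Frame

section Echelon

variable {𝕜 ι : Type*} [RCLike 𝕜]

def IsPivot (a : ι → ℝ) (x : EuclideanSpace 𝕜 ι) (i : ι) : Prop :=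
  x i = 1 ∧ ∀ j, a j < a i → x j = 0

theorem span_singleton_sup_inf_ker_proj {V : Submodule 𝕜 (EuclideanSpace 𝕜 ι)}
    {u : EuclideanSpace 𝕜 ι} {i : ι} (hu : u ∈ V) (hui : u i = 1) :
    (𝕜 ∙ u) ⊔ (V ⊓ (EuclideanSpace.proj i).ker) = V := by
  refine le_antisymm (sup_le ((Submodule.span_singleton_le_iff_mem _ _).mpr hu) inf_le_left)
    fun y hy => ?_
  have hker : y - y i • u ∈ V ⊓ (EuclideanSpace.proj i).ker :=
    ⟨V.sub_mem hy (V.smul_mem _ hu), by simp [hui]⟩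
  simpa using Submodule.add_mem_sup
    (Submodule.smul_mem _ (y i) (Submodule.mem_span_singleton_self u)) hker

variable [Fintype ι]

theorem finrank_inf_ker_proj_add_one {V : Submodule 𝕜 (EuclideanSpace 𝕜 ι)}
    {u : EuclideanSpace 𝕜 ι} {i : ι} (hu : u ∈ V) (hui : u i = 1) :
    Module.finrank 𝕜 (V ⊓ (EuclideanSpace.proj i).ker : Submodule 𝕜 _) + 1 =
      Module.finrank 𝕜 V := by
  have hu0 : u ≠ 0 := by rintro rfl; simp at hui
  have hbot : (𝕜 ∙ u) ⊓ (V ⊓ (EuclideanSpace.proj i).ker) = ⊥ := by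
    rw [eq_bot_iff]
    rintro _ ⟨hx, -, hxi⟩
    obtain ⟨c, rfl⟩ := Submodule.mem_span_singleton.mp hx
    simp_all
  have := Submodule.finrank_sup_add_finrank_inf_eq (𝕜 ∙ u) (V ⊓ (EuclideanSpace.proj i).ker)
  rw [span_singleton_sup_inf_ker_proj hu hui, hbot, finrank_bot, finrank_span_singleton hu0] at this
  omega

theorem exists_pivot (a : ι → ℝ) {V : Submodule 𝕜 (EuclideanSpace 𝕜 ι)} (hV : V ≠ ⊥) :
    ∃ i, ∃ u ∈ V, u i = 1 ∧ ∀ y ∈ V, ∀ j, a j < a i → y j = 0 := by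
  classical
  obtain ⟨x, hxV, hx⟩ := Submodule.exists_mem_ne_zero_of_ne_bot hV
  set S := Finset.univ.filter fun j => ∃ y ∈ V, y j ≠ 0
  have hS : S.Nonempty := by
    obtain ⟨j, hj⟩ : ∃ j, x j ≠ 0 := by
      by_contra! h
      exact hx (PiLp.ext h)
    exact ⟨j, Finset.mem_filter.mpr ⟨Finset.mem_univ j, x, hxV, hj⟩⟩
  obtain ⟨i, hiS, hmin⟩ := S.exists_min_image a hS
  obtain ⟨y, hyV, hyi⟩ := (Finset.mem_filter.mp hiS).2
  refine ⟨i, (y i)⁻¹ • y, V.smul_mem _ hyV, inv_mul_cancel₀ hyi, fun z hzV j hj => ?_⟩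
  by_contra hzj
  exact (hmin j (Finset.mem_filter.mpr ⟨Finset.mem_univ j, z, hzV, hzj⟩)).not_gt hj

theorem exists_isPivot_span_eq (a : ι → ℝ) {k : ℕ} {V : Submodule 𝕜 (EuclideanSpace 𝕜 ι)}
    (hV : Module.finrank 𝕜 V = k) :
    ∃ (p : Fin k → ι) (v : Fin k → EuclideanSpace 𝕜 ι), Function.Injective p ∧
      (∀ m, IsPivot a (v m) (p m)) ∧ Submodule.span 𝕜 (Set.range v) = V := by
  induction k generalizing V with
  | zero =>
    refine ⟨Fin.elim0, Fin.elim0, fun m => m.elim0, fun m => m.elim0, ?_⟩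
    rw [Set.range_eq_empty, Submodule.span_empty, eq_comm, ← Submodule.finrank_eq_zero, hV]
  | succ k ih =>
    have hV0 : V ≠ ⊥ := by rintro rfl; simp at hV
    obtain ⟨i, u, hu, hui, hmin⟩ := exists_pivot a hV0
    have hW := finrank_inf_ker_proj_add_one hu hui
    obtain ⟨p, v, hp, hpiv, hspan⟩ := ih (V := V ⊓ (EuclideanSpace.proj i).ker) (by omega)
    have hvW (m : Fin k) : v m ∈ V ⊓ (EuclideanSpace.proj i).ker :=
      hspan ▸ Submodule.subset_span ⟨m, rfl⟩
    refine ⟨Fin.cons i p, Fin.cons u v, Fin.cons_injective_iff.mpr ⟨?_, hp⟩, ?_, ?_⟩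
    · rintro ⟨m, rfl⟩
      simpa [(hpiv m).1] using (hvW m).2
    · exact Fin.cases ⟨hui, fun j hj => hmin u hu j hj⟩ fun m => by simpa using hpiv m
    · rw [Fin.range_cons, Submodule.span_insert, hspan, span_singleton_sup_inf_ker_proj hu hui]

end Echelon

section Flow

theorem projCLM_eq_starProjection {n : ℕ} (V : Submodule ℂ (EuclideanSpace ℂ (Fin n))) :
    projCLM V = V.starProjection := rfl

theorem flowMap_apply (n : ℕ) (a : Fin n → ℝ) (t : ℝ) (x : EuclideanSpace ℂ (Fin n))
    (j : Fin n) : flowMap n a t x j = Real.exp (-(t * a j)) * x j := rfl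

theorem flowMap_neg (n : ℕ) (a : Fin n → ℝ) (t : ℝ) : flowMap n (-a) (-t) = flowMap n a t := by
  ext x j
  simp [flowMap_apply]

theorem tendsto_exp_mul_atTop_of_neg {c : ℝ} (hc : c < 0) :
    Tendsto (fun t : ℝ => (Real.exp (t * c) : ℂ)) atTop (𝓝 0) := by
  have h := (Complex.continuous_ofReal.tendsto 0).comp
    (Real.tendsto_exp_atBot.comp (tendsto_id.atTop_mul_const_of_neg hc))
  rwa [Complex.ofReal_zero] at h

theorem tendsto_exp_smul_flowMap_of_isPivot {n : ℕ} {a : Fin n → ℝ} (ha : Function.Injective a)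
    {x : EuclideanSpace ℂ (Fin n)} {i : Fin n} (hx : IsPivot a x i) :
    Tendsto (fun t : ℝ => (Real.exp (t * a i) : ℂ) • flowMap n a t x) atTop
      (𝓝 (EuclideanSpace.single i 1)) := by
  rw [(PiLp.homeomorph 2 _).isInducing.tendsto_nhds_iff, tendsto_pi_nhds]
  intro j
  have hcoord (t : ℝ) : (Real.exp (t * a i) : ℂ) * flowMap n a t x j =
      Real.exp (t * (a i - a j)) * x j := by
    rw [flowMap_apply, ← mul_assoc, ← Complex.ofReal_mul, ← Real.exp_add, mul_sub, sub_eq_add_neg]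
  change Tendsto (fun t : ℝ => (Real.exp (t * a i) : ℂ) * flowMap n a t x j) atTop
    (𝓝 (EuclideanSpace.single i (1 : ℂ) j))
  simp only [hcoord, PiLp.single_apply]
  rcases lt_trichotomy (a j) (a i) with hj | hj | hj
  · simp only [hx.2 j hj, mul_zero, if_neg (ha.ne_iff.mp hj.ne)]
    exact tendsto_const_nhds
  · simp only [ha hj, hx.1, sub_self, mul_zero, Real.exp_zero, Complex.ofReal_one, mul_one,
      if_true]
    exact tendsto_const_nhds
  · rw [if_neg (ha.ne_iff.mp hj.ne'), ← zero_mul (x j)]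
    exact (tendsto_exp_mul_atTop_of_neg (sub_neg.mpr hj)).mul_const (x j)

theorem exists_tendsto_projCLM_map_flowMap_atTop {n k : ℕ} {a : Fin n → ℝ}
    (ha : Function.Injective a) {V : Submodule ℂ (EuclideanSpace ℂ (Fin n))}
    (hV : Module.finrank ℂ V = k) :
    ∃ I : Finset (Fin n), I.card = k ∧
      Tendsto (fun t : ℝ => projCLM (V.map (flowMap n a t))) atTop
        (𝓝 (projCLM (coordSub n I))) := by
  obtain ⟨p, v, hp, hpiv, hspan⟩ := exists_isPivot_span_eq a hV
  refine ⟨Finset.univ.image p, by simp [Finset.card_image_of_injective _ hp], ?_⟩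
  have hframe : Tendsto (fun t m => (Real.exp (t * a (p m)) : ℂ) • flowMap n a t (v m)) atTop
      (𝓝 fun m => EuclideanSpace.single (p m) 1) :=
    tendsto_pi_nhds.mpr fun m => tendsto_exp_smul_flowMap_of_isPivot ha (hpiv m)
  have hspan_t (t : ℝ) : Submodule.span ℂ
      (Set.range fun m => (Real.exp (t * a (p m)) : ℂ) • flowMap n a t (v m)) =
        V.map (flowMap n a t) := by
    rw [span_range_smul_eq_of_isUnit (fun m => (Complex.ofReal_ne_zero.mpr
      (Real.exp_ne_zero _)).isUnit), Set.range_comp', ← Submodule.map_span, hspan]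
  have hspan_lim : Submodule.span ℂ (Set.range fun m => EuclideanSpace.single (p m) (1 : ℂ)) =
      coordSub n (Finset.univ.image p) := by
    rw [coordSub, Finset.coe_image, Finset.coe_univ, Set.image_univ, ← Set.range_comp]
    rfl
  have := tendsto_starProjection_span hframe
    ((EuclideanSpace.orthonormal_single.comp p hp).linearIndependent)
  simpa only [projCLM_eq_starProjection, hspan_t, hspan_lim] using this

end Flow

theorem stmt3_general (n k : ℕ) (a : Fin n → ℝ) (ha : StrictMono a)
    (V : Submodule ℂ (EuclideanSpace ℂ (Fin n))) (hV : Module.finrank ℂ V = k) :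
    ∃ Iminus Iplus : Finset (Fin n), Iminus.card = k ∧ Iplus.card = k ∧
      Filter.Tendsto (fun t : ℝ => projCLM (V.map (flowMap n a t))) Filter.atBot
        (nhds (projCLM (coordSub n Iminus))) ∧
      Filter.Tendsto (fun t : ℝ => projCLM (V.map (flowMap n a t))) Filter.atTop
        (nhds (projCLM (coordSub n Iplus))) := by
  obtain ⟨Iplus, hIplus, hplus⟩ := exists_tendsto_projCLM_map_flowMap_atTop ha.injective hV
  obtain ⟨Iminus, hIminus, hminus⟩ :=
    exists_tendsto_projCLM_map_flowMap_atTop (a := -a) (neg_injective.comp ha.injective) hV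
  refine ⟨Iminus, Iplus, hIminus, hIplus, ?_, hplus⟩
  simpa only [Function.comp_def, flowMap_neg] using hminus.comp tendsto_neg_atBot_atTop

/-- Every flow line of `V ↦ exp(−tA)·V` on the Grassmannian of `k`-planes in `ℂⁿ`
converges, in the operator norm on projections, to coordinate subspaces as
`t → −∞` and as `t → +∞`. -/
theorem stmt3 (n k : ℕ) (hk : k ≤ n) (a : Fin n → ℝ) (ha : StrictMono a)
    (V : Submodule ℂ (EuclideanSpace ℂ (Fin n))) (hV : Module.finrank ℂ V = k) :
    ∃ Iminus Iplus : Finset (Fin n), Iminus.card = k ∧ Iplus.card = k ∧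
      Filter.Tendsto (fun t : ℝ => projCLM (V.map (flowMap n a t))) Filter.atBot
        (nhds (projCLM (coordSub n Iminus))) ∧
      Filter.Tendsto (fun t : ℝ => projCLM (V.map (flowMap n a t))) Filter.atTop
        (nhds (projCLM (coordSub n Iplus))) :=
  stmt3_general n k a ha V hV

end Stmt3
end

section
/- Let A be an n×n Hermitian complex matrix and let P be an n×n matrix with P² = P = Pᴴ and rank(P) = k. The following are equivalent: (i) for every differentiable curve t ↦ P(t) of n×n matrices satisfying P(t)² = P(t) = P(t)ᴴ and rank(P(t)) = k for all t, with P(0) = P, the derivative of t ↦ Re Tr(A P(t)) at t = 0 vanishes; (ii) A P = P A. Moreover, if A = diag(a) with a : Fin n → ℝ injective, then (i)–(ii) hold if and only if P is the orthogonal projection onto span{e_i : i ∈ I} for some k-element subset I ⊆ Fin n. -/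
/-!
Differentiating `Q t * Q t = Q t` at `0` shows that the velocity `D` of a curve of projections
through `P` satisfies `D P + P D = D`, hence `P D P = 0`; if `A` commutes with `P` this gives
`Tr (A D) = 2 Tr (A P D) = 2 Tr (A P D P) = 0`. Conversely, `C = P A - A P` is skew-Hermitian, so
`t ↦ exp (t C) P exp (-t C)` is a curve of orthogonal projections of the same rank through `P`
with velocity `C P - P C`, along which `Re Tr (A Q)` has derivative `Re Tr (C C) = -‖C‖²`;
criticality forces `C = 0`. For `A = diagonal a` with distinct `a i`, the matrices commuting with
`A` are the diagonal ones, and a diagonal idempotent has entries in `{0, 1}`.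
-/

open Matrix

theorem IsStarProjection.unitary_conjugate {R : Type*} [Monoid R] [StarMul R] {p u : R}
    (hp : IsStarProjection p) (hu : u ∈ unitary R) : IsStarProjection (u * p * star u) where
  isIdempotentElem :=
    calc u * p * star u * (u * p * star u) = u * (p * (star u * u) * p) * star u := by
          simp only [mul_assoc]
      _ = u * p * star u := by
          rw [Unitary.star_mul_self_of_mem hu, mul_one, hp.isIdempotentElem.eq, mul_assoc]
  isSelfAdjoint := hp.isSelfAdjoint.conjugate u

section Exp

open NormedSpace

variable {𝕂 𝔸 : Type*} [RCLike 𝕂] [NormedRing 𝔸] [NormedAlgebra 𝕂 𝔸] [CompleteSpace 𝔸]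

theorem hasDerivAt_exp_smul_mul_mul_exp_smul_neg (x p : 𝔸) (t : 𝕂) :
    HasDerivAt (fun s : 𝕂 => exp (s • x) * p * exp (s • -x))
      (exp (t • x) * x * p * exp (t • -x) + exp (t • x) * p * (exp (t • -x) * -x)) t :=
  ((hasDerivAt_exp_smul_const x t).mul_const p).mul (hasDerivAt_exp_smul_const (-x) t)

theorem hasDerivAt_exp_smul_mul_mul_exp_smul_neg_zero (x p : 𝔸) :
    HasDerivAt (fun s : 𝕂 => exp (s • x) * p * exp (s • -x)) (x * p - p * x) 0 := by
  simpa [sub_eq_add_neg] using hasDerivAt_exp_smul_mul_mul_exp_smul_neg (𝕂 := 𝕂) x p 0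

end Exp

namespace Matrix

variable {m : Type*} [Fintype m]

section CommRing

variable {R : Type*} [CommRing R]

theorem mul_mul_eq_zero_of_mul_add_mul_eq {P D : Matrix m m R} (hP : IsIdempotentElem P)
    (hD : D * P + P * D = D) : P * D * P = 0 := by
  have h : P * D * P + P * D * P = P * D * P :=
    calc P * D * P + P * D * P = P * D * (P * P) + P * P * D * P := by rw [hP.eq]
      _ = P * (D * P + P * D) * P := by noncomm_ring
      _ = P * D * P := by rw [hD]
  simpa using h

theorem trace_mul_eq_zero_of_commute_of_mul_add_mul_eq {A P D : Matrix m m R}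
    (hP : IsIdempotentElem P) (hAP : Commute A P) (hD : D * P + P * D = D) :
    trace (A * D) = 0 := by
  have hAPD : trace (A * P * D) = 0 :=
    calc trace (A * P * D) = trace (P * (A * P * D)) := by
          rw [← mul_assoc, ← mul_assoc, ← hAP.eq, mul_assoc A P P, hP.eq]
      _ = trace (A * (P * D * P)) := by rw [trace_mul_comm]; simp only [mul_assoc]
      _ = 0 := by rw [mul_mul_eq_zero_of_mul_add_mul_eq hP hD, mul_zero, trace_zero]
  calc trace (A * D) = trace (A * (D * P)) + trace (A * P * D) := by
        rw [← trace_add, mul_assoc A P D, ← mul_add, hD]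
    _ = 2 * trace (A * P * D) := by
        rw [← mul_assoc, trace_mul_cycle, ← hAP.eq, two_mul]
    _ = 0 := by rw [hAPD, mul_zero]

theorem rank_unitary_conjugate [DecidableEq m] [StarRing R] {U : Matrix m m R}
    (hU : U ∈ unitary (Matrix m m R)) (P : Matrix m m R) : (U * P * star U).rank = P.rank := by
  have hdet : ∀ V ∈ unitary (Matrix m m R), IsUnit V.det := fun V hV =>
    (isUnit_iff_isUnit_det V).mp (Unitary.isUnit_coe (U := ⟨V, hV⟩))
  rw [rank_mul_eq_left_of_isUnit_det _ _ (hdet _ (Unitary.star_mem hU)),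
    rank_mul_eq_right_of_isUnit_det _ _ (hdet U hU)]

end CommRing

open ComplexOrder in
theorem eq_zero_of_re_trace_mul_self_eq_zero {C : Matrix m m ℂ} (hC : C ∈ skewAdjoint _)
    (h : (trace (C * C)).re = 0) : C = 0 := by
  have hCC : trace (Cᴴ * C) = - trace (C * C) := by
    rw [show Cᴴ = -C from skewAdjoint.mem_iff.mp hC, neg_mul, trace_neg]
  have hnonneg := (posSemidef_conjTranspose_mul_self C).trace_nonneg
  rw [Complex.nonneg_iff] at hnonneg
  refine trace_conjTranspose_mul_self_eq_zero_iff.mp (Complex.ext ?_ hnonneg.2.symm)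
  simp [hCC, h]

theorem mul_add_mul_eq_of_hasDerivAt_of_isIdempotentElem {𝕜 𝔸 : Type*}
    [NontriviallyNormedField 𝕜] [NormedRing 𝔸] [NormedAlgebra 𝕜 𝔸]
    {Q : 𝕜 → Matrix m m 𝔸} {D : Matrix m m 𝔸} {t₀ : 𝕜}
    (hQ : ∀ i j, HasDerivAt (fun t => Q t i j) (D i j) t₀) (hQ2 : ∀ t, IsIdempotentElem (Q t)) :
    D * Q t₀ + Q t₀ * D = D := by
  ext i j
  have hsq : HasDerivAt (fun t => (Q t * Q t) i j) ((D * Q t₀ + Q t₀ * D) i j) t₀ := by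
    simp only [mul_apply, add_apply, ← Finset.sum_add_distrib]
    exact HasDerivAt.fun_sum fun l _ => (hQ i l).fun_mul (hQ l j)
  simp only [fun t => (hQ2 t).eq] at hsq
  exact hsq.unique (hQ i j)

theorem hasDerivAt_re_trace_mul (A : Matrix m m ℂ) {Q : ℝ → Matrix m m ℂ} {D : Matrix m m ℂ}
    {t₀ : ℝ} (hQ : ∀ i j, HasDerivAt (fun t => Q t i j) (D i j) t₀) :
    HasDerivAt (fun t => (trace (A * Q t)).re) (trace (A * D)).re t₀ := by
  have h : HasDerivAt (fun t => trace (A * Q t)) (trace (A * D)) t₀ := by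
    simp only [trace, diag, mul_apply]
    exact HasDerivAt.fun_sum fun i _ => HasDerivAt.fun_sum fun j _ => (hQ j i).const_mul (A i j)
  exact Complex.reCLM.hasFDerivAt.comp_hasDerivAt t₀ h

theorem deriv_re_trace_mul_eq_zero_of_commute {A P : Matrix m m ℂ} (hAP : Commute A P)
    {Q : ℝ → Matrix m m ℂ} (hQd : ∀ i j, DifferentiableAt ℝ (fun t => Q t i j) 0)
    (hQ2 : ∀ t, IsIdempotentElem (Q t)) (hQ0 : Q 0 = P) :
    deriv (fun t => (trace (A * Q t)).re) 0 = 0 := by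
  set D : Matrix m m ℂ := of fun i j => deriv (fun t => Q t i j) 0
  have hQD : ∀ i j, HasDerivAt (fun t => Q t i j) (D i j) 0 := fun i j => (hQd i j).hasDerivAt
  have hD := mul_add_mul_eq_of_hasDerivAt_of_isIdempotentElem hQD hQ2
  rw [hQ0] at hD
  rw [(hasDerivAt_re_trace_mul A hQD).deriv,
    trace_mul_eq_zero_of_commute_of_mul_add_mul_eq (hQ0 ▸ hQ2 0) hAP hD, Complex.zero_re]

section LinftyOp

open NormedSpace

variable [DecidableEq m]

-- Any submultiplicative norm would do: it is needed only to differentiate `exp`.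
attribute [local instance] Matrix.linftyOpNormedAddCommGroup Matrix.linftyOpNormedRing
  Matrix.linftyOpNormedAlgebra

theorem hasDerivAt_apply {Q : ℝ → Matrix m m ℂ} {D : Matrix m m ℂ} {t : ℝ}
    (h : HasDerivAt Q D t) (i j : m) : HasDerivAt (fun s => Q s i j) (D i j) t :=
  (entryLinearMap ℝ ℂ i j).toContinuousLinearMap.hasFDerivAt.comp_hasDerivAt t h

theorem commute_of_forall_deriv_re_trace_mul_eq_zero {A P : Matrix m m ℂ} (hA : A.IsHermitian)
    (hP : IsStarProjection P)
    (hcrit : ∀ Q : ℝ → Matrix m m ℂ,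
        (∀ i j, Differentiable ℝ fun t => Q t i j) →
        (∀ t, Q t * Q t = Q t) → (∀ t, (Q t)ᴴ = Q t) → (∀ t, (Q t).rank = P.rank) →
        Q 0 = P →
        deriv (fun t => (trace (A * Q t)).re) 0 = 0) :
    Commute A P := by
  set C := P * A - A * P with hC
  have hCskew : C ∈ skewAdjoint (Matrix m m ℂ) := by
    rw [skewAdjoint.mem_iff, hC, star_sub, star_mul, star_mul, hP.isSelfAdjoint.star_eq,
      hA.isSelfAdjoint.star_eq, neg_sub]
  have hstar : ∀ s : ℝ, star (exp (s • C)) = exp (s • -C) := fun s => by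
    rw [star_eq_conjTranspose, ← exp_conjTranspose, conjTranspose_smul, star_trivial,
      show Cᴴ = -C from skewAdjoint.mem_iff.mp hCskew]
  have hU : ∀ s : ℝ, exp (s • C) ∈ unitary (Matrix m m ℂ) := fun s => by
    have hcomm : Commute (s • C) (s • -C) := ((Commute.refl C).neg_right.smul_left s).smul_right s
    rw [Unitary.mem_iff, hstar, ← exp_add_of_commute _ _ hcomm, ← exp_add_of_commute _ _ hcomm.symm,
      smul_neg, add_neg_cancel, neg_add_cancel, exp_zero, and_self]
  set Q : ℝ → Matrix m m ℂ := fun s => exp (s • C) * P * exp (s • -C) with hQ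
  have hQP : ∀ s, IsStarProjection (Q s) := fun s => by
    simpa only [hQ, hstar] using hP.unitary_conjugate (hU s)
  have hrkQ : ∀ s, (Q s).rank = P.rank := fun s => by
    simpa only [hQ, hstar] using rank_unitary_conjugate (hU s) P
  have hQ' : HasDerivAt Q (C * P - P * C) 0 := hasDerivAt_exp_smul_mul_mul_exp_smul_neg_zero C P
  have hQdiff : ∀ i j, Differentiable ℝ fun t => Q t i j := fun i j t =>
    (hasDerivAt_apply (hasDerivAt_exp_smul_mul_mul_exp_smul_neg C P t) i j).differentiableAt
  have htrace : trace (A * (C * P - P * C)) = trace (C * C) := by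
    rw [mul_sub, trace_sub, ← mul_assoc, ← mul_assoc, trace_mul_cycle A C P, ← trace_sub,
      ← sub_mul]
  have hderiv := hcrit Q hQdiff (fun s => (hQP s).isIdempotentElem) (fun s => (hQP s).isSelfAdjoint)
    hrkQ (by simp [hQ])
  rw [(hasDerivAt_re_trace_mul A (hasDerivAt_apply hQ')).deriv, htrace] at hderiv
  exact (sub_eq_zero.mp (eq_zero_of_re_trace_mul_self_eq_zero hCskew hderiv)).symm

end LinftyOp

variable [DecidableEq m]

theorem isDiag_of_commute_diagonal {R : Type*} [CommRing R] [NoZeroDivisors R] {d : m → R}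
    (hd : Function.Injective d) {M : Matrix m m R} (h : Commute (diagonal d) M) : M.IsDiag := by
  intro i j hij
  have hij' : (d i - d j) * M i j = 0 := by
    have hMij := congr_fun₂ h.eq i j
    rw [diagonal_mul, mul_diagonal] at hMij
    rw [sub_mul, hMij, mul_comm, sub_self]
  exact (mul_eq_zero.mp hij').resolve_left (sub_ne_zero.mpr (hd.ne hij))

theorem IsDiag.exists_eq_diagonal_ite_of_isIdempotentElem {R : Type*} [Semiring R]
    [IsLeftCancelMulZero R] {P : Matrix m m R} (hdiag : P.IsDiag) (hP : IsIdempotentElem P) :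
    ∃ I : Finset m, P = diagonal fun i => if i ∈ I then 1 else 0 := by
  classical
  have hentry : ∀ i, P i i = 0 ∨ P i i = 1 := fun i => by
    have hPii := congr_fun₂ hP.eq i i
    rw [← hdiag.diagonal_diag, diagonal_mul_diagonal, diagonal_apply_eq, diagonal_apply_eq,
      diag_apply] at hPii
    exact IsIdempotentElem.iff_eq_zero_or_one.mp hPii
  refine ⟨Finset.univ.filter fun i => P i i = 1, ?_⟩
  rw [← hdiag.diagonal_diag]
  congr 1
  funext i
  rcases hentry i with h | h <;> simp [h]

theorem rank_diagonal_ite {K : Type*} [Field K] (I : Finset m) :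
    (diagonal fun i => if i ∈ I then (1 : K) else 0).rank = I.card := by
  classical
  rw [rank_diagonal, Fintype.card_subtype]
  congr 1
  ext i
  by_cases h : i ∈ I <;> simp [h]

theorem commute_diagonal_iff_exists_finset {K : Type*} [Field K] {d : m → K}
    (hd : Function.Injective d) {P : Matrix m m K} (hP : IsIdempotentElem P) :
    Commute (diagonal d) P ↔
      ∃ I : Finset m, I.card = P.rank ∧ P = diagonal fun i => if i ∈ I then 1 else 0 := by
  constructor
  · intro h
    obtain ⟨I, hI⟩ :=
      (isDiag_of_commute_diagonal hd h).exists_eq_diagonal_ite_of_isIdempotentElem hP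
    exact ⟨I, by rw [hI, rank_diagonal_ite], hI⟩
  · rintro ⟨I, -, rfl⟩
    exact commute_diagonal d _

end Matrix

/-- Criticality of `P ↦ Re Tr(A P)` on the manifold of rank-`k` Hermitian
projections: `P` is a critical point iff `A P = P A`; and for `A = diag(a)` with
`a` injective this happens iff `P` is the orthogonal projection onto a
coordinate `k`-plane `span {eᵢ : i ∈ I}`. -/
theorem stmt4 (n k : ℕ) (A P : Matrix (Fin n) (Fin n) ℂ)
    (hA : A.IsHermitian) (hP2 : P * P = P) (hPH : Pᴴ = P) (hrk : P.rank = k) :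
    ((∀ Q : ℝ → Matrix (Fin n) (Fin n) ℂ,
        (∀ i j, Differentiable ℝ fun t => Q t i j) →
        (∀ t, Q t * Q t = Q t) → (∀ t, (Q t)ᴴ = Q t) → (∀ t, (Q t).rank = k) →
        Q 0 = P →
        deriv (fun t => (Matrix.trace (A * Q t)).re) 0 = 0) ↔ A * P = P * A) ∧
    (∀ a : Fin n → ℝ, Function.Injective a → A = Matrix.diagonal (fun i => (a i : ℂ)) →
      (A * P = P * A ↔ ∃ I : Finset (Fin n), I.card = k ∧
        P = Matrix.diagonal (fun i => if i ∈ I then (1 : ℂ) else 0))) := by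
  subst hrk
  have hP : IsStarProjection P := ⟨hP2, hPH⟩
  refine ⟨⟨commute_of_forall_deriv_re_trace_mul_eq_zero hA hP, ?_⟩, ?_⟩
  · intro hAP Q hQd hQ2 _ _ hQ0
    exact deriv_re_trace_mul_eq_zero_of_commute hAP (fun i j => hQd i j 0) hQ2 hQ0
  · rintro a ha rfl
    exact commute_diagonal_iff_exists_finset (Complex.ofReal_injective.comp ha) hP2
end

section
/- Let A be an n×n Hermitian complex matrix, let V ⊆ ℂ^n be a k-dimensional subspace, and let Q(t) denote the matrix of the orthogonal projection of ℂ^n onto exp(−tA)·V. Then t ↦ Q(t) is differentiable and satisfies, for all t ∈ ℝ, the double-bracket equation Q'(t) = −( Q(t) A (I − Q(t)) + (I − Q(t)) A Q(t) ) = −[Q(t), [Q(t), A]]. -/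
/-!
Put `P = Q 0` and `g = exp (-tA)`. With `B = g P`, the matrix `B (Bᴴ B + 1 - P)⁻¹ Bᴴ` is a
Hermitian idempotent with range `range B = g · V`: the summand `1 - P` makes the Gram matrix
invertible without changing it on `range P`. Orthogonal projections are determined by their
ranges, so this explicit formula is `Q t`. Since `g` is Hermitian and commutes with `A`,
differentiating it gives `Q' = -A Q - Q A + 2 Q A Q`, which is `-[Q, [Q, A]]` because `Q² = Q`.
-/

open Matrix
open scoped ComplexOrder

/-- The gradient of `q ↦ Re Tr (a q)` on the Grassmannian, at the projection `q`. -/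
def projGradient {R : Type*} [Ring R] (a q : R) : R := q * a * (1 - q) + (1 - q) * a * q

theorem projGradient_eq_lie {R : Type*} [Ring R] (a : R) {q : R} (hq : IsIdempotentElem q) :
    projGradient a q = ⁅q, ⁅q, a⁆⁆ := by
  have hqq : ∀ x, q * (q * x) = q * x := fun x => by rw [← mul_assoc, hq.eq]
  simp only [projGradient, Ring.lie_def, mul_sub, sub_mul, mul_one, one_mul, mul_assoc, hqq,
    hq.eq]
  abel

namespace Matrix

variable {ι R : Type*} [Fintype ι] [DecidableEq ι]

section CommRing

variable [CommRing R] {P : Matrix ι ι R}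

theorem mul_eq_right_of_range_le {S : Matrix ι ι R} (hP : IsIdempotentElem P)
    (h : LinearMap.range S.mulVecLin ≤ LinearMap.range P.mulVecLin) : P * S = S := by
  have hP' : IsIdempotentElem P.mulVecLin := by
    rw [IsIdempotentElem, Module.End.mul_eq_comp, ← mulVecLin_mul, hP.eq]
  apply (toLin' (R := R)).injective
  rw [toLin'_mul]
  exact (LinearMap.IsIdempotentElem.comp_eq_right_iff hP' S.mulVecLin).2 h

variable [StarRing R]

theorem eq_of_range_mulVecLin_eq {Q : Matrix ι ι R} (hP : IsIdempotentElem P)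
    (hPh : P.IsHermitian) (hQ : IsIdempotentElem Q) (hQh : Q.IsHermitian)
    (h : LinearMap.range P.mulVecLin = LinearMap.range Q.mulVecLin) : P = Q := by
  have hPQ : P * Q = Q := mul_eq_right_of_range_le hP h.ge
  have hQP : Q * P = P := mul_eq_right_of_range_le hQ h.le
  calc P = Q * P := hQP.symm
    _ = (P * Q)ᴴ := by rw [conjTranspose_mul, hPh.eq, hQh.eq]
    _ = Q := by rw [hPQ, hQh.eq]

def imageGram (g P : Matrix ι ι R) : Matrix ι ι R := (g * P)ᴴ * (g * P) + (1 - P)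

/-- The orthogonal projection onto `g · range P`, when `g` is invertible and `P` is an
orthogonal projection. -/
noncomputable def imageProj (g P : Matrix ι ι R) : Matrix ι ι R :=
  g * P * (imageGram g P)⁻¹ * (g * P)ᴴ

theorem imageGram_mul_self (g : Matrix ι ι R) (hP : IsIdempotentElem P) :
    imageGram g P * P = (g * P)ᴴ * (g * P) := by
  rw [imageGram, add_mul, sub_mul, one_mul, hP.eq, sub_self, add_zero, mul_assoc, mul_assoc,
    hP.eq]

theorem isHermitian_imageGram (g : Matrix ι ι R) (hPh : P.IsHermitian) :
    (imageGram g P).IsHermitian := by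
  refine IsHermitian.add ?_ (isHermitian_one.sub hPh)
  simp only [IsHermitian, conjTranspose_mul, conjTranspose_conjTranspose, mul_assoc]

theorem self_mul_imageGram (g : Matrix ι ι R) (hP : IsIdempotentElem P) (hPh : P.IsHermitian) :
    P * imageGram g P = (g * P)ᴴ * (g * P) := by
  calc P * imageGram g P = (imageGram g P * P)ᴴ := by
        rw [conjTranspose_mul, hPh.eq, (isHermitian_imageGram g hPh).eq]
    _ = (g * P)ᴴ * (g * P) := by
        rw [imageGram_mul_self g hP, conjTranspose_mul, conjTranspose_conjTranspose]

theorem isHermitian_imageProj (g : Matrix ι ι R) (hPh : P.IsHermitian) :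
    (imageProj g P).IsHermitian := by
  simp only [IsHermitian, imageProj, conjTranspose_mul, conjTranspose_conjTranspose,
    (isHermitian_imageGram g hPh).inv.eq, mul_assoc]

theorem imageGram_of_isHermitian {g : Matrix ι ι R} (hg : g.IsHermitian) (hPh : P.IsHermitian) :
    imageGram g P = P * (g * g) * P + (1 - P) := by
  simp only [imageGram, conjTranspose_mul, hg.eq, hPh.eq, mul_assoc]

theorem imageProj_of_isHermitian {g : Matrix ι ι R} (hg : g.IsHermitian) (hPh : P.IsHermitian) :
    imageProj g P = g * P * (P * (g * g) * P + (1 - P))⁻¹ * (P * g) := by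
  rw [imageProj, imageGram_of_isHermitian hg hPh, conjTranspose_mul, hg.eq, hPh.eq]

end CommRing

section StarOrderedField

variable [Field R] [PartialOrder R] [StarRing R] [StarOrderedRing R] {g P : Matrix ι ι R}

theorem isUnit_imageGram (hg : IsUnit g) (hP : IsIdempotentElem P) (hPh : P.IsHermitian) :
    IsUnit (imageGram g P) := by
  rw [← mulVec_injective_iff_isUnit]
  refine (injective_iff_map_eq_zero (imageGram g P).mulVecLin).2 fun x hx => ?_
  rw [mulVecLin_apply] at hx
  have hgram : ((g * P)ᴴ * (g * P)) *ᵥ x = 0 := by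
    rw [← self_mul_imageGram g hP hPh, ← mulVec_mulVec, hx, mulVec_zero]
  have hPx : P *ᵥ x = 0 := by
    refine mulVec_injective_iff_isUnit.2 hg ?_
    rw [mulVec_mulVec, (conjTranspose_mul_self_mulVec_eq_zero _ _).1 hgram, mulVec_zero]
  rwa [imageGram, add_mulVec, sub_mulVec, one_mulVec, hgram, hPx, sub_zero, zero_add] at hx

theorem imageProj_mul (hg : IsUnit g) (hP : IsIdempotentElem P) (hPh : P.IsHermitian) :
    imageProj g P * (g * P) = g * P := by
  have hG := (isUnit_iff_isUnit_det _).1 (isUnit_imageGram hg hP hPh)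
  calc imageProj g P * (g * P) = g * P * ((imageGram g P)⁻¹ * (imageGram g P * P)) := by
        rw [imageGram_mul_self g hP, imageProj]
        simp only [mul_assoc]
    _ = g * P := by rw [← mul_assoc _ _ P, nonsing_inv_mul _ hG, one_mul, mul_assoc, hP.eq]

theorem isIdempotentElem_imageProj (hg : IsUnit g) (hP : IsIdempotentElem P)
    (hPh : P.IsHermitian) : IsIdempotentElem (imageProj g P) := by
  calc imageProj g P * imageProj g P
      = imageProj g P * (g * P) * ((imageGram g P)⁻¹ * (g * P)ᴴ) := by
        nth_rw 2 [imageProj]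
        simp only [mul_assoc]
    _ = imageProj g P := by rw [imageProj_mul hg hP hPh, imageProj, mul_assoc (g * P)]

theorem range_imageProj (hg : IsUnit g) (hP : IsIdempotentElem P) (hPh : P.IsHermitian) :
    LinearMap.range (imageProj g P).mulVecLin = LinearMap.range (g * P).mulVecLin := by
  apply le_antisymm
  · rw [imageProj, mul_assoc, mulVecLin_mul]
    exact LinearMap.range_comp_le_range _ _
  · conv_lhs => rw [← imageProj_mul hg hP hPh, mulVecLin_mul]
    exact LinearMap.range_comp_le_range _ _

end StarOrderedField

section LinftyOp

-- A normed-algebra structure on matrices for the calculus; `HasDerivAt` only sees the topology,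
-- which is the same for every matrix norm.
attribute [local instance] Matrix.linftyOpNormedAddCommGroup Matrix.linftyOpNormedRing
  Matrix.linftyOpNormedAlgebra

variable {𝕜 : Type*} [RCLike 𝕜]

theorem hasDerivAt_inv {f : ℝ → Matrix ι ι 𝕜} {f' : Matrix ι ι 𝕜} {t : ℝ}
    (hf : HasDerivAt f f' t) (hft : IsUnit (f t)) :
    HasDerivAt (fun s => (f s)⁻¹) (-((f t)⁻¹ * f' * (f t)⁻¹)) t := by
  have h := hasFDerivAt_ringInverse (𝕜 := ℝ) hft.unit
  rw [hft.unit_spec] at h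
  have h' := h.comp_hasDerivAt t hf
  simp only [Function.comp_def, ← nonsing_inv_eq_ringInverse] at h'
  refine h'.congr_deriv ?_
  simp [coe_units_inv, mul_assoc]

theorem hasDerivAt_imageProj_exp {A P : Matrix ι ι 𝕜} (hA : A.IsHermitian)
    (hP : IsIdempotentElem P) (hPh : P.IsHermitian) (t : ℝ) :
    HasDerivAt (fun s : ℝ => imageProj (NormedSpace.exp (s • -A)) P)
      (-projGradient A (imageProj (NormedSpace.exp (t • -A)) P)) t := by
  set E : ℝ → Matrix ι ι 𝕜 := fun s => NormedSpace.exp (s • -A)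
  have hEh (s : ℝ) : (E s).IsHermitian := (hA.neg.smul (IsSelfAdjoint.all s)).exp
  have hE' (s : ℝ) : HasDerivAt E (-A * E s) s := hasDerivAt_exp_smul_const' (-A) s
  have hcomm : E t * A = A * E t := ((Commute.refl A).neg_right.smul_right t).exp_right.eq.symm
  have hcomm' (X : Matrix ι ι 𝕜) : E t * (A * X) = A * (E t * X) := by
    rw [← mul_assoc, hcomm, mul_assoc]
  have hQ : (fun s => imageProj (E s) P) =
      fun s => E s * P * (P * (E s * E s) * P + (1 - P))⁻¹ * (P * E s) :=
    funext fun s => imageProj_of_isHermitian (hEh s) hPh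
  rw [hQ, imageProj_of_isHermitian (hEh t) hPh]
  have hG : HasDerivAt (fun s => P * (E s * E s) * P + (1 - P))
      (P * (-A * E t * E t + E t * (-A * E t)) * P) t :=
    ((((hE' t).mul (hE' t)).const_mul P).mul_const P).add_const _
  have hGunit : IsUnit (P * (E t * E t) * P + (1 - P)) := by
    rw [← imageGram_of_isHermitian (hEh t) hPh]
    exact isUnit_imageGram (isUnit_exp _) hP hPh
  refine ((((hE' t).mul_const P).mul (hasDerivAt_inv hG hGunit)).mul
    ((hE' t).const_mul P)).congr_deriv ?_
  -- once `A` is moved left past `E t`, the derivative of the Gram factor is `2 Q A Q`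
  simp only [projGradient, mul_sub, sub_mul, mul_add, add_mul, mul_one, one_mul, mul_neg,
    neg_mul, neg_add, neg_neg, neg_sub, mul_assoc, Pi.mul_apply, hcomm, hcomm']
  abel

end LinftyOp

end Matrix

attribute [local instance] Matrix.normedAddCommGroup Matrix.normedSpace

theorem stmt5_general (n : ℕ) (A : Matrix (Fin n) (Fin n) ℂ) (hA : A.IsHermitian)
    (V : Submodule ℂ (Fin n → ℂ))
    (Q : ℝ → Matrix (Fin n) (Fin n) ℂ)
    (hQidem : ∀ t, Q t * Q t = Q t) (hQherm : ∀ t, (Q t)ᴴ = Q t)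
    (hQrange : ∀ t : ℝ, LinearMap.range (Q t).mulVecLin =
      V.map (NormedSpace.exp ((-t : ℂ) • A)).mulVecLin) :
    ∀ t : ℝ,
      HasDerivAt Q (-(Q t * A * (1 - Q t) + (1 - Q t) * A * Q t)) t ∧
      -(Q t * A * (1 - Q t) + (1 - Q t) * A * Q t) =
        -(Q t * (Q t * A - A * Q t) - (Q t * A - A * Q t) * Q t) := by
  have hexp (s : ℝ) : NormedSpace.exp ((-s : ℂ) • A) = NormedSpace.exp (s • -A) := by
    rw [← Complex.ofReal_neg, Complex.coe_smul, neg_smul, smul_neg]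
  have hV : LinearMap.range (Q 0).mulVecLin = V := by simpa using hQrange 0
  have hQ (s : ℝ) : imageProj (NormedSpace.exp (s • -A)) (Q 0) = Q s := by
    have hu : IsUnit (NormedSpace.exp (s • -A)) := isUnit_exp _
    refine eq_of_range_mulVecLin_eq (isIdempotentElem_imageProj hu (hQidem 0) (hQherm 0))
      (isHermitian_imageProj _ (hQherm 0)) (hQidem s) (hQherm s) ?_
    rw [range_imageProj hu (hQidem 0) (hQherm 0), mulVecLin_mul, LinearMap.range_comp, hV,
      hQrange s, hexp]
  intro t
  have hgrad := congrArg Neg.neg (projGradient_eq_lie A (hQidem t))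
  simp only [projGradient, Ring.lie_def] at hgrad
  refine ⟨?_, hgrad⟩
  simpa only [hQ, projGradient] using hasDerivAt_imageProj_exp hA (hQidem 0) (hQherm 0) t

/-- If `Q t` is the matrix of the orthogonal projection of `ℂⁿ` onto
`exp(−tA)·V` (characterized as the Hermitian idempotent matrix with column space
`exp(−tA)·V`), for `A` Hermitian and `V` a `k`-dimensional subspace, then
`t ↦ Q t` is differentiable and satisfies the double-bracket equation
`Q' = −(Q A (1−Q) + (1−Q) A Q) = −[Q,[Q,A]]`. -/
theorem stmt5 (n k : ℕ) (A : Matrix (Fin n) (Fin n) ℂ) (hA : A.IsHermitian)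
    (V : Submodule ℂ (Fin n → ℂ)) (hV : Module.finrank ℂ V = k)
    (Q : ℝ → Matrix (Fin n) (Fin n) ℂ)
    (hQidem : ∀ t, Q t * Q t = Q t) (hQherm : ∀ t, (Q t)ᴴ = Q t)
    (hQrange : ∀ t : ℝ, LinearMap.range (Q t).mulVecLin =
      V.map (NormedSpace.exp ((-t : ℂ) • A)).mulVecLin) :
    ∀ t : ℝ,
      HasDerivAt Q (-(Q t * A * (1 - Q t) + (1 - Q t) * A * Q t)) t ∧
      -(Q t * A * (1 - Q t) + (1 - Q t) * A * Q t) =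
        -(Q t * (Q t * A - A * Q t) - (Q t * A - A * Q t) * Q t) :=
  stmt5_general n A hA V Q hQidem hQherm hQrange
end

section
/- Let H be a complex Hilbert space and let P, Q be orthogonal projections on H (continuous linear operators with P∘P = P, P self-adjoint, and likewise for Q) such that ‖P − Q‖ < 1 in the operator norm. Then Q restricts to an injective linear map from range(P) into range(Q), and P restricts to an injective linear map from range(Q) into range(P); in particular, range(P) is finite-dimensional if and only if range(Q) is, and in that case dim range(P) = dim range(Q). -/
/-!
For `x ∈ range P` we have `P x = x`, so `‖x - Q x‖ = ‖(P - Q) x‖ ≤ ‖P - Q‖ ‖x‖`. If `‖P - Q‖ < 1`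
this forbids `Q x = 0` unless `x = 0`: `Q` is injective on `range P`, and symmetrically `P` is
injective on `range Q`. Injections in both directions give the statement about dimensions.
-/

namespace ContinuousLinearMap

variable {𝕜 E : Type*} [NontriviallyNormedField 𝕜] [NormedAddCommGroup E] [NormedSpace 𝕜 E]
  {P Q : E →L[𝕜] E}

theorem eq_zero_of_mem_range_of_apply_eq_zero (hP : IsIdempotentElem P) (hPQ : ‖P - Q‖ < 1)
    {x : E} (hx : x ∈ LinearMap.range (P : E →ₗ[𝕜] E)) (hQx : Q x = 0) : x = 0 := by
  have hPx : P x = x :=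
    (LinearMap.IsIdempotentElem.mem_range_iff (IsIdempotentElem.toLinearMap hP)).mp hx
  have hle : ‖x‖ ≤ ‖P - Q‖ * ‖x‖ := by
    simpa [hPx, hQx] using (P - Q).le_opNorm x
  by_contra hx0
  exact hle.not_gt (mul_lt_of_lt_one_left (norm_pos_iff.mpr hx0) hPQ)

theorem injOn_range_of_norm_sub_lt_one (hP : IsIdempotentElem P) (hPQ : ‖P - Q‖ < 1) :
    Set.InjOn Q (LinearMap.range (P : E →ₗ[𝕜] E)) := fun x hx y hy hxy =>
  sub_eq_zero.mp <| eq_zero_of_mem_range_of_apply_eq_zero hP hPQ (sub_mem hx hy)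
    (by rw [map_sub, hxy, sub_self])

variable (P Q) in
def restrictRanges :
    LinearMap.range (P : E →ₗ[𝕜] E) →ₗ[𝕜] LinearMap.range (Q : E →ₗ[𝕜] E) :=
  ((Q : E →ₗ[𝕜] E).domRestrict _).codRestrict _ fun _ => LinearMap.mem_range_self _ _

theorem injective_restrictRanges (hP : IsIdempotentElem P) (hPQ : ‖P - Q‖ < 1) :
    Function.Injective (restrictRanges P Q) := fun x y hxy =>
  Subtype.ext <| injOn_range_of_norm_sub_lt_one hP hPQ x.2 y.2 (congrArg Subtype.val hxy)

end ContinuousLinearMap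

open ContinuousLinearMap in
theorem stmt8_general (H : Type*) [NormedAddCommGroup H] [InnerProductSpace ℂ H]
    (P Q : H →L[ℂ] H) (hP2 : P.comp P = P)
    (hQ2 : Q.comp Q = Q) (hPQ : ‖P - Q‖ < 1) :
    Set.MapsTo Q (LinearMap.range (P : H →ₗ[ℂ] H) : Set H) (LinearMap.range (Q : H →ₗ[ℂ] H) : Set H) ∧
    Set.InjOn Q (LinearMap.range (P : H →ₗ[ℂ] H) : Set H) ∧
    Set.MapsTo P (LinearMap.range (Q : H →ₗ[ℂ] H) : Set H) (LinearMap.range (P : H →ₗ[ℂ] H) : Set H) ∧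
    Set.InjOn P (LinearMap.range (Q : H →ₗ[ℂ] H) : Set H) ∧
    (FiniteDimensional ℂ (LinearMap.range (P : H →ₗ[ℂ] H)) ↔ FiniteDimensional ℂ (LinearMap.range (Q : H →ₗ[ℂ] H))) ∧
    (FiniteDimensional ℂ (LinearMap.range (P : H →ₗ[ℂ] H)) → FiniteDimensional ℂ (LinearMap.range (Q : H →ₗ[ℂ] H)) →
      Module.finrank ℂ (LinearMap.range (P : H →ₗ[ℂ] H)) = Module.finrank ℂ (LinearMap.range (Q : H →ₗ[ℂ] H))) := by
  have hQP : ‖Q - P‖ < 1 := by rwa [norm_sub_rev]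
  have hPQ_inj := injective_restrictRanges hP2 hPQ
  have hQP_inj := injective_restrictRanges hQ2 hQP
  refine ⟨fun x _ => LinearMap.mem_range_self _ x, injOn_range_of_norm_sub_lt_one hP2 hPQ,
    fun x _ => LinearMap.mem_range_self _ x, injOn_range_of_norm_sub_lt_one hQ2 hQP,
    ⟨fun _ => .of_injective _ hQP_inj, fun _ => .of_injective _ hPQ_inj⟩, fun _ _ => ?_⟩
  exact (LinearMap.finrank_le_finrank_of_injective hPQ_inj).antisymm
    (LinearMap.finrank_le_finrank_of_injective hQP_inj)

/-- If `P, Q` are orthogonal projections on a complex Hilbert space with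
`‖P − Q‖ < 1`, then `Q` restricts to an injective map `range P → range Q` and
`P` to an injective map `range Q → range P`; hence `range P` is
finite-dimensional iff `range Q` is, and in that case their dimensions agree. -/
theorem stmt8 (H : Type*) [NormedAddCommGroup H] [InnerProductSpace ℂ H] [CompleteSpace H]
    (P Q : H →L[ℂ] H) (hP2 : P.comp P = P) (hP : IsSelfAdjoint P)
    (hQ2 : Q.comp Q = Q) (hQ : IsSelfAdjoint Q) (hPQ : ‖P - Q‖ < 1) :
    Set.MapsTo Q (LinearMap.range (P : H →ₗ[ℂ] H) : Set H) (LinearMap.range (Q : H →ₗ[ℂ] H) : Set H) ∧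
    Set.InjOn Q (LinearMap.range (P : H →ₗ[ℂ] H) : Set H) ∧
    Set.MapsTo P (LinearMap.range (Q : H →ₗ[ℂ] H) : Set H) (LinearMap.range (P : H →ₗ[ℂ] H) : Set H) ∧
    Set.InjOn P (LinearMap.range (Q : H →ₗ[ℂ] H) : Set H) ∧
    (FiniteDimensional ℂ (LinearMap.range (P : H →ₗ[ℂ] H)) ↔ FiniteDimensional ℂ (LinearMap.range (Q : H →ₗ[ℂ] H))) ∧
    (FiniteDimensional ℂ (LinearMap.range (P : H →ₗ[ℂ] H)) → FiniteDimensional ℂ (LinearMap.range (Q : H →ₗ[ℂ] H)) →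
      Module.finrank ℂ (LinearMap.range (P : H →ₗ[ℂ] H)) = Module.finrank ℂ (LinearMap.range (Q : H →ₗ[ℂ] H))) :=
  stmt8_general H P Q hP2 hQ2 hPQ
end

section
/- Fix ν ∈ ℕ and a field 𝕂. Let C = ⊕_{d ∈ ℕ} C^d be the graded 𝕂-vector space with basis {a_{k,m} : 0 ≤ k ≤ ν+1, m ∈ ℕ} ∪ {b_{k,m} : 0 ≤ k ≤ ν, m ∈ ℕ}, where a_{k,m} has degree 2(k+m) and b_{k,m} has degree 2(k+m)+1, and let D : C → C be the 𝕂-linear map of degree +1 determined by D(a_{k,m}) = 0 and D(b_{k,m}) = a_{k,m+1} + a_{k+1,m}. Then D ∘ D = 0; the cohomology H^d = (ker D ∩ C^d)/D(C^{d−1}) vanishes for every odd d; for every j ∈ ℕ the space H^{2j} is one-dimensional, spanned by the class of a_{0,j}; and [a_{k,m}] = (−1)^k [a_{0,k+m}]. In particular the total cohomology is isomorphic as a graded 𝕂-vector space to the polynomial ring 𝕂[λ] with λ in degree 2. -/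
/-!
`D` kills the `a`'s and is injective on the span of the `b`'s, being triangular in `k`; as odd
degrees contain only `b`'s, the odd cocycles vanish. In even degree `2j` every chain is a cocycle.
The functional `a_{k,m} ↦ (-1)^k` vanishes on `D b_{k,m} = a_{k,m+1} + a_{k+1,m}`, so `a_{0,j}` is
not a coboundary; conversely these same relations move `a_{k,m}` to `-a_{k-1,m+1}` modulo
coboundaries, so every cocycle of degree `2j` is cohomologous to its signed sum times `a_{0,j}`.
-/

namespace Stmt9

/-- Index set for the basis elements `a_{k,m}` (degree `2(k+m)`), `0 ≤ k ≤ ν+1`. -/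
abbrev AIdx (ν : ℕ) : Type := {p : ℕ × ℕ // p.1 ≤ ν + 1}

/-- Index set for the basis elements `b_{k,m}` (degree `2(k+m)+1`), `0 ≤ k ≤ ν`. -/
abbrev BIdx (ν : ℕ) : Type := {p : ℕ × ℕ // p.1 ≤ ν}

/-- The underlying vector space of the complex: the `𝕂`-vector space with basis
`{a_{k,m}} ∪ {b_{k,m}}`. -/
abbrev Cplx (𝕂 : Type*) [Field 𝕂] (ν : ℕ) : Type _ := (AIdx ν →₀ 𝕂) × (BIdx ν →₀ 𝕂)

variable (𝕂 : Type*) [Field 𝕂] (ν : ℕ)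

/-- The basis vector `a_{k,m}`. -/
noncomputable def basA (p : AIdx ν) : Cplx 𝕂 ν := (Finsupp.single p 1, 0)

/-- The basis vector `b_{k,m}`. -/
noncomputable def basB (p : BIdx ν) : Cplx 𝕂 ν := (0, Finsupp.single p 1)

/-- The differential, the `𝕂`-linear map determined by
`D a_{k,m} = 0` and `D b_{k,m} = a_{k,m+1} + a_{k+1,m}`. -/
noncomputable def D : Cplx 𝕂 ν →ₗ[𝕂] Cplx 𝕂 ν :=
  LinearMap.prod
    ((Finsupp.lsum 𝕂 fun p : BIdx ν =>
        LinearMap.toSpanSingleton 𝕂 (AIdx ν →₀ 𝕂)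
          (Finsupp.single ⟨(p.1.1, p.1.2 + 1), p.2.trans (Nat.le_succ ν)⟩ 1 +
            Finsupp.single ⟨(p.1.1 + 1, p.1.2), Nat.succ_le_succ p.2⟩ 1)).comp
      (LinearMap.snd 𝕂 (AIdx ν →₀ 𝕂) (BIdx ν →₀ 𝕂)))
    0

/-- The degree-`d` homogeneous component `C^d`: the span of the basis vectors of
degree `d` (`a_{k,m}` has degree `2(k+m)`, `b_{k,m}` has degree `2(k+m)+1`). -/
noncomputable def degComp (d : ℕ) : Submodule 𝕂 (Cplx 𝕂 ν) :=
  Submodule.span 𝕂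
    ((basA 𝕂 ν '' {p : AIdx ν | 2 * (p.1.1 + p.1.2) = d}) ∪
      (basB 𝕂 ν '' {p : BIdx ν | 2 * (p.1.1 + p.1.2) + 1 = d}))

/-- Degree-`d` cocycles: `ker D ∩ C^d`. -/
noncomputable def Zc (d : ℕ) : Submodule 𝕂 (Cplx 𝕂 ν) :=
  LinearMap.ker (D 𝕂 ν) ⊓ degComp 𝕂 ν d

/-- Degree-`d` coboundaries: `D (C^{d−1})` (which is `0` when `d = 0`). -/
noncomputable def Bc (d : ℕ) : Submodule 𝕂 (Cplx 𝕂 ν) :=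
  (degComp 𝕂 ν (d - 1)).map (D 𝕂 ν)

section

variable {𝕂 ν}

noncomputable def dB : (BIdx ν →₀ 𝕂) →ₗ[𝕂] (AIdx ν →₀ 𝕂) :=
  Finsupp.lsum 𝕂 fun p : BIdx ν =>
    LinearMap.toSpanSingleton 𝕂 (AIdx ν →₀ 𝕂)
      (Finsupp.single ⟨(p.1.1, p.1.2 + 1), p.2.trans (Nat.le_succ ν)⟩ 1 +
        Finsupp.single ⟨(p.1.1 + 1, p.1.2), Nat.succ_le_succ p.2⟩ 1)

theorem D_apply (x : Cplx 𝕂 ν) : D 𝕂 ν x = (dB x.2, 0) := rfl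

theorem dB_single (p : BIdx ν) (c : 𝕂) :
    dB (Finsupp.single p c) =
      Finsupp.single ⟨(p.1.1, p.1.2 + 1), p.2.trans (Nat.le_succ ν)⟩ c +
        Finsupp.single ⟨(p.1.1 + 1, p.1.2), Nat.succ_le_succ p.2⟩ c := by
  simp [dB, LinearMap.toSpanSingleton_apply, Finsupp.smul_single]

theorem dB_apply_zero_succ (b : BIdx ν →₀ 𝕂) (m : ℕ) :
    dB b ⟨(0, m + 1), Nat.zero_le _⟩ = b ⟨(0, m), Nat.zero_le _⟩ := by
  induction b using Finsupp.induction_linear with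
  | zero => simp
  | add f g hf hg => simp only [map_add, Finsupp.add_apply, hf, hg]
  | single p c =>
    obtain ⟨⟨k, n⟩, hp⟩ := p
    simp only [dB_single, Finsupp.add_apply, Finsupp.single_apply, Subtype.mk.injEq,
      Prod.mk.injEq]
    split_ifs <;> first | omega | simp_all

theorem dB_apply_succ_succ (b : BIdx ν →₀ 𝕂) (k m : ℕ) (hk : k + 1 ≤ ν) :
    dB b ⟨(k + 1, m + 1), Nat.le_succ_of_le hk⟩ =
      b ⟨(k + 1, m), hk⟩ + b ⟨(k, m + 1), Nat.le_of_succ_le hk⟩ := by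
  induction b using Finsupp.induction_linear with
  | zero => simp
  | add f g hf hg => simp only [map_add, Finsupp.add_apply, hf, hg]; ring
  | single p c =>
    obtain ⟨⟨i, n⟩, hp⟩ := p
    simp only [dB_single, Finsupp.add_apply, Finsupp.single_apply, Subtype.mk.injEq,
      Prod.mk.injEq]
    split_ifs <;> first | omega | simp_all

theorem dB_injective : Function.Injective (dB : (BIdx ν →₀ 𝕂) → _) := by
  refine (injective_iff_map_eq_zero _).2 fun b hb => ?_
  suffices h : ∀ k m (hk : k ≤ ν), b ⟨(k, m), hk⟩ = 0 by
    ext ⟨⟨k, m⟩, hk⟩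
    exact h k m hk
  intro k
  induction k with
  | zero => intro m _; simpa [hb] using (dB_apply_zero_succ b m).symm
  | succ k ih =>
    intro m hk
    have := dB_apply_succ_succ b k m hk
    rwa [hb, ih (m + 1), add_zero, Finsupp.zero_apply, eq_comm] at this

theorem Cplx.hom_ext {M : Type*} [AddCommMonoid M] [Module 𝕂 M] {f g : Cplx 𝕂 ν →ₗ[𝕂] M}
    (ha : ∀ p, f (basA 𝕂 ν p) = g (basA 𝕂 ν p)) (hb : ∀ p, f (basB 𝕂 ν p) = g (basB 𝕂 ν p)) :
    f = g :=
  LinearMap.prod_ext (Finsupp.lhom_ext' fun p => LinearMap.ext_ring (ha p))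
    (Finsupp.lhom_ext' fun p => LinearMap.ext_ring (hb p))

theorem D_basA (p : AIdx ν) : D 𝕂 ν (basA 𝕂 ν p) = 0 := by
  simp [D_apply, basA]

theorem D_basB (p : BIdx ν) :
    D 𝕂 ν (basB 𝕂 ν p) =
      basA 𝕂 ν ⟨(p.1.1, p.1.2 + 1), p.2.trans (Nat.le_succ ν)⟩ +
        basA 𝕂 ν ⟨(p.1.1 + 1, p.1.2), Nat.succ_le_succ p.2⟩ := by
  simp [D_apply, basA, basB, dB_single]

theorem D_comp_D : D 𝕂 ν ∘ₗ D 𝕂 ν = 0 :=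
  Cplx.hom_ext (fun p => by simp [D_basA]) (fun p => by simp [D_basB, D_basA])

theorem eq_zero_of_D_eq_zero {x : Cplx 𝕂 ν} (hD : D 𝕂 ν x = 0) (h1 : x.1 = 0) : x = 0 :=
  Prod.ext h1 (dB_injective (by simpa [D_apply] using hD))

theorem degComp_two_mul (j : ℕ) :
    degComp 𝕂 ν (2 * j) = Submodule.span 𝕂 (basA 𝕂 ν '' {p | p.1.1 + p.1.2 = j}) := by
  have hA : {p : AIdx ν | 2 * (p.1.1 + p.1.2) = 2 * j} = {p | p.1.1 + p.1.2 = j} := by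
    ext; simp
  have hB : {p : BIdx ν | 2 * (p.1.1 + p.1.2) + 1 = 2 * j} = ∅ := by
    ext; simp; omega
  rw [degComp, hA, hB, Set.image_empty, Set.union_empty]

theorem degComp_two_mul_add_one (j : ℕ) :
    degComp 𝕂 ν (2 * j + 1) = Submodule.span 𝕂 (basB 𝕂 ν '' {p | p.1.1 + p.1.2 = j}) := by
  have hA : {p : AIdx ν | 2 * (p.1.1 + p.1.2) = 2 * j + 1} = ∅ := by
    ext; simp; omega
  have hB : {p : BIdx ν | 2 * (p.1.1 + p.1.2) + 1 = 2 * j + 1} = {p | p.1.1 + p.1.2 = j} := by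
    ext; simp
  rw [degComp, hA, hB, Set.image_empty, Set.empty_union]

theorem map_D_degComp_two_mul (j : ℕ) : (degComp 𝕂 ν (2 * j)).map (D 𝕂 ν) = ⊥ := by
  rw [degComp_two_mul, Submodule.map_span, Submodule.span_eq_bot]
  rintro _ ⟨_, ⟨p, -, rfl⟩, rfl⟩
  exact D_basA p

theorem map_D_degComp_le (e : ℕ) : (degComp 𝕂 ν e).map (D 𝕂 ν) ≤ degComp 𝕂 ν (e + 1) := by
  rw [degComp, Submodule.map_span, Submodule.span_le]
  rintro _ ⟨_, ⟨p, -, rfl⟩ | ⟨p, hp, rfl⟩, rfl⟩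
  · simp [D_basA]
  · rw [D_basB]
    refine Submodule.add_mem _ (Submodule.subset_span ?_) (Submodule.subset_span ?_) <;>
      exact Or.inl ⟨_, by simp only [Set.mem_ofPred_eq] at hp ⊢; omega, rfl⟩

theorem Bc_le_Zc (d : ℕ) : Bc 𝕂 ν d ≤ Zc 𝕂 ν d := by
  refine le_inf ?_ ?_
  · rintro _ ⟨x, -, rfl⟩
    exact LinearMap.congr_fun (D_comp_D (𝕂 := 𝕂) (ν := ν)) x
  · cases d with
    | zero =>
      show (degComp 𝕂 ν (2 * 0)).map (D 𝕂 ν) ≤ _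
      rw [map_D_degComp_two_mul]
      exact bot_le
    | succ e => exact map_D_degComp_le e

theorem Zc_two_mul_add_one (j : ℕ) : Zc 𝕂 ν (2 * j + 1) = ⊥ := by
  refine eq_bot_iff.2 fun x ⟨hD, hx⟩ => eq_zero_of_D_eq_zero hD ?_
  rw [degComp_two_mul_add_one] at hx
  refine Submodule.span_induction ?_ rfl (fun _ _ _ _ h h' => ?_) (fun _ _ _ h => ?_) hx
  · rintro _ ⟨p, -, rfl⟩; rfl
  · simp [h, h']
  · simp [h]

noncomputable def signedSum : Cplx 𝕂 ν →ₗ[𝕂] 𝕂 :=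
  Finsupp.lsum 𝕂 (fun p : AIdx ν => LinearMap.toSpanSingleton 𝕂 𝕂 ((-1 : 𝕂) ^ p.1.1)) ∘ₗ
    LinearMap.fst 𝕂 _ _

theorem signedSum_basA (p : AIdx ν) : signedSum (basA 𝕂 ν p) = (-1 : 𝕂) ^ p.1.1 := by
  simp [signedSum, basA]

theorem signedSum_comp_D : signedSum ∘ₗ D 𝕂 ν = 0 :=
  Cplx.hom_ext (fun p => by simp [D_basA])
    (fun p => by simp [D_basB, signedSum_basA, pow_succ])

theorem basA_zero_notMem_Bc (j : ℕ) : basA 𝕂 ν ⟨(0, j), Nat.zero_le _⟩ ∉ Bc 𝕂 ν (2 * j) := by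
  rintro ⟨x, -, hx⟩
  have := LinearMap.congr_fun signedSum_comp_D x
  simp [hx, signedSum_basA] at this

theorem basA_sub_mem_Bc (k m j : ℕ) (hk : k ≤ ν + 1) (hj : k + m = j) :
    basA 𝕂 ν ⟨(k, m), hk⟩ - ((-1 : 𝕂) ^ k) • basA 𝕂 ν ⟨(0, j), Nat.zero_le _⟩ ∈
      Bc 𝕂 ν (2 * j) := by
  induction k generalizing m with
  | zero => subst hj; simp
  | succ k ih =>
    have hk' : k ≤ ν := Nat.le_of_succ_le_succ hk
    have hDb : D 𝕂 ν (basB 𝕂 ν ⟨(k, m), hk'⟩) ∈ Bc 𝕂 ν (2 * j) :=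
      ⟨_, Submodule.subset_span (Or.inr ⟨_, by simp only [Set.mem_ofPred_eq]; omega, rfl⟩), rfl⟩
    set a₀ := basA 𝕂 ν ⟨(0, j), Nat.zero_le _⟩
    have hsplit : basA 𝕂 ν ⟨(k + 1, m), hk⟩ - ((-1 : 𝕂) ^ (k + 1)) • a₀ =
        D 𝕂 ν (basB 𝕂 ν ⟨(k, m), hk'⟩) -
          (basA 𝕂 ν ⟨(k, m + 1), by omega⟩ - ((-1 : 𝕂) ^ k) • a₀) := by
      rw [D_basB, pow_succ, mul_neg_one]
      module
    rw [hsplit]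
    exact Submodule.sub_mem _ hDb (ih (m + 1) (by omega) (by omega))

theorem sub_signedSum_smul_mem_Bc {j : ℕ} {x : Cplx 𝕂 ν} (hx : x ∈ degComp 𝕂 ν (2 * j)) :
    x - signedSum x • basA 𝕂 ν ⟨(0, j), Nat.zero_le _⟩ ∈ Bc 𝕂 ν (2 * j) := by
  let π : Cplx 𝕂 ν →ₗ[𝕂] Cplx 𝕂 ν :=
    LinearMap.id - signedSum.smulRight (basA 𝕂 ν ⟨(0, j), Nat.zero_le _⟩)
  suffices degComp 𝕂 ν (2 * j) ≤ (Bc 𝕂 ν (2 * j)).comap π from this hx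
  rw [degComp_two_mul, Submodule.span_le]
  rintro _ ⟨⟨⟨k, m⟩, hk⟩, hp, rfl⟩
  simpa [π, signedSum_basA] using basA_sub_mem_Bc k m j hk hp

end

/-- For the complex with `D b_{k,m} = a_{k,m+1} + a_{k+1,m}` (`0 ≤ k ≤ ν`):
`D² = 0`; `D` has degree `+1` (coboundaries are cocycles); the odd cohomology
vanishes; each even cohomology `H^{2j}` is one-dimensional, spanned by the
class of `a_{0,j}`; and `[a_{k,m}] = (−1)^k [a_{0,k+m}]`.  In particular the
total cohomology is the polynomial ring `𝕂[λ]` with `λ` in degree `2`. -/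
theorem stmt9 :
    (D 𝕂 ν ∘ₗ D 𝕂 ν = 0) ∧
    (∀ d : ℕ, Bc 𝕂 ν d ≤ Zc 𝕂 ν d) ∧
    (∀ d : ℕ, Odd d → Zc 𝕂 ν d ≤ Bc 𝕂 ν d) ∧
    (∀ j : ℕ,
      basA 𝕂 ν ⟨(0, j), Nat.zero_le _⟩ ∈ Zc 𝕂 ν (2 * j) ∧
      basA 𝕂 ν ⟨(0, j), Nat.zero_le _⟩ ∉ Bc 𝕂 ν (2 * j) ∧
      ∀ x ∈ Zc 𝕂 ν (2 * j), ∃ c : 𝕂,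
        x - c • basA 𝕂 ν ⟨(0, j), Nat.zero_le _⟩ ∈ Bc 𝕂 ν (2 * j)) ∧
    (∀ (k m : ℕ) (hk : k ≤ ν + 1),
      basA 𝕂 ν ⟨(k, m), hk⟩ - ((-1 : 𝕂) ^ k) • basA 𝕂 ν ⟨(0, k + m), Nat.zero_le _⟩ ∈
        Bc 𝕂 ν (2 * (k + m))) := by
  refine ⟨D_comp_D, Bc_le_Zc, ?_, fun j => ⟨?_, basA_zero_notMem_Bc j, ?_⟩,
    fun k m hk => basA_sub_mem_Bc k m _ hk rfl⟩
  · rintro d ⟨j, rfl⟩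
    rw [Zc_two_mul_add_one]
    exact bot_le
  · exact ⟨D_basA _, Submodule.subset_span (Or.inl ⟨_, by simp, rfl⟩)⟩
  · exact fun x hx => ⟨signedSum x, sub_signedSum_smul_mem_Bc hx.2⟩

end Stmt9
end
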